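/- Suppose Ψ: [0,T] → (real symmetric d×d matrices) is differentiable and satisfies dΨ/dt = -α₁(1 - g(Ψ)exp(-Ψ)) + α₂F(Ψ,E) + α₃(WΨ - ΨW) pointwise, where g(Ψ) = d/tr(exp(-Ψ)), tr(E) = 0, W is antisymmetric, and F(Ψ,E) = Σ_{i,j} f(λ_i-λ_j) P_i E P_j with f(0)=2. Then tr(Ψ(t)) is constant in t; equivalently det(exp(Ψ(t))) is constant. -/

import Mathlib

open Matrix

attribute [local instance] Matrix.frobeniusNormedAddCommGroup Matrix.frobeniusNormedSpace

/-!
Take the trace of the equation. The relaxation term is traceless because `g(Ψ)` is exactly the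
normalisation making `tr (g(Ψ) exp(-Ψ)) = d`; this needs `tr exp(-Ψ) > 0`, which holds since
`exp(-Ψ) = B Bᵀ` with `B = exp(-Ψ/2)` invertible. The rank-one projectors `P i` form a complete
family of orthogonal idempotents, so `tr (P i E P j) = δᵢⱼ tr (P i E)` and
`tr F(Ψ,E) = f 0 · tr E = 0`. A commutator is traceless. Hence `tr Ψ` has zero derivative on
`[0,T]` and is constant; diagonalising the symmetric `Ψ t` gives `det (exp Ψ) = exp (tr Ψ)`.
-/

namespace Matrix

variable {n : Type*} [Fintype n]

theorem trace_eq_of_hasDerivWithinAt_trace_eq_zero {a b : ℝ} {Ψ Ψ' : ℝ → Matrix n n ℝ}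
    (hΨ : ∀ t ∈ Set.Icc a b, HasDerivWithinAt Ψ (Ψ' t) (Set.Icc a b) t)
    (htr : ∀ t ∈ Set.Icc a b, (Ψ' t).trace = 0) :
    ∀ t ∈ Set.Icc a b, (Ψ t).trace = (Ψ a).trace := by
  intro t ht
  have hderiv : ∀ s ∈ Set.Icc a b,
      HasDerivWithinAt (fun s => (Ψ s).trace) 0 (Set.Icc a b) s := fun s hs =>
    htr s hs ▸
      (traceLinearMap n ℝ ℝ).toContinuousLinearMap.hasFDerivAt.comp_hasDerivWithinAt s (hΨ s hs)
  have h := (convex_Icc a b).norm_image_sub_le_of_norm_hasDerivWithin_le (C := 0) hderiv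
    (fun _ _ => norm_zero.le) (Set.left_mem_Icc.2 (ht.1.trans ht.2)) ht
  simpa [sub_eq_zero] using h

variable [DecidableEq n]

theorem trace_exp_pos_of_isSymm [Nonempty n] {A : Matrix n n ℝ} (hA : A.IsSymm) :
    0 < (NormedSpace.exp A).trace := by
  set B := NormedSpace.exp ((1 / 2 : ℝ) • A) with hB
  have hsq : NormedSpace.exp A = B * Bᴴ := by
    rw [conjTranspose_eq_transpose_of_trivial, hB, ← exp_transpose, transpose_smul, hA.eq,
      ← exp_add_of_commute _ _ (Commute.refl _), ← add_smul]
    norm_num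
  have hinj : Function.Injective B.vecMul := vecMul_injective_iff_isUnit.mpr (isUnit_exp _)
  rw [hsq]
  exact (PosDef.mul_conjTranspose_self B hinj).trace_pos

theorem trace_one_sub_card_div_trace_exp_smul_exp {A : Matrix n n ℝ} (hA : A.IsSymm) :
    (1 - ((Fintype.card n : ℝ) / (NormedSpace.exp A).trace) • NormedSpace.exp A).trace = 0 := by
  cases isEmpty_or_nonempty n
  · simp [trace]
  · rw [trace_sub, trace_smul, trace_one, smul_eq_mul,
      div_mul_cancel₀ _ (trace_exp_pos_of_isSymm hA).ne', sub_self]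

theorem det_exp_conj {U : Matrix n n ℝ} (hU : IsUnit U) (A : Matrix n n ℝ) :
    (NormedSpace.exp (U * A * U⁻¹)).det = (NormedSpace.exp A).det := by
  rw [exp_conj U A hU, det_conj hU]

theorem det_exp_diagonal (v : n → ℝ) :
    (NormedSpace.exp (diagonal v)).det = Real.exp (diagonal v).trace := by
  simp [exp_diagonal, det_diagonal, Real.exp_sum, Pi.exp_def, ← Real.exp_eq_exp_ℝ]

theorem det_exp_of_isSymm {A : Matrix n n ℝ} (hA : A.IsSymm) :
    (NormedSpace.exp A).det = Real.exp A.trace := by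
  have hH : A.IsHermitian := isHermitian_iff_isSymm.mpr hA
  obtain ⟨U, hU, v, rfl⟩ :
      ∃ U : Matrix n n ℝ, IsUnit U ∧ ∃ v, A = U * diagonal v * U⁻¹ := by
    refine ⟨hH.eigenvectorUnitary, Unitary.isUnit_coe, hH.eigenvalues, ?_⟩
    conv_lhs => rw [hH.spectral_theorem]
    rw [Unitary.conjStarAlgAut_apply,
      inv_eq_left_inv (Unitary.coe_star_mul_self hH.eigenvectorUnitary)]
    simp
  rw [det_exp_conj hU, det_exp_diagonal, trace_conj hU]

theorem completeOrthogonalIdempotents_vecMulVec {R : Type*} [CommRing R] {e : n → n → R}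
    (he : ∀ i j, e i ⬝ᵥ e j = if i = j then 1 else 0) :
    CompleteOrthogonalIdempotents fun i => vecMulVec (e i) (e i) := by
  have hmul : ∀ i j, vecMulVec (e i) (e i) * vecMulVec (e j) (e j) =
      if i = j then vecMulVec (e i) (e i) else 0 := by
    intro i j
    rw [vecMulVec_mul_vecMulVec, he]
    split_ifs with h <;> simp [h]
  have horth : of e * (of e)ᵀ = 1 := by
    ext i j
    rw [mul_apply', one_apply]
    exact he i j
  refine ⟨⟨fun i => (hmul i i).trans (if_pos rfl),
    fun i j hij => by simpa [hij] using hmul i j⟩, ?_⟩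
  rw [← mul_eq_one_comm.mp horth]
  ext j k
  simp [sum_apply, mul_apply, vecMulVec_apply]

theorem _root_.CompleteOrthogonalIdempotents.trace_sum_sum_smul_mul_mul {R ι : Type*}
    [CommRing R] [Fintype ι] [DecidableEq ι] {P : ι → Matrix n n R}
    (hP : CompleteOrthogonalIdempotents P) {c : ι → ι → R} {a : R} (hc : ∀ i, c i i = a)
    (E : Matrix n n R) :
    (∑ i, ∑ j, c i j • (P i * E * P j)).trace = a * E.trace := by
  have hdiag : ∀ i j, (P i * E * P j).trace = if i = j then (P i * E).trace else 0 := by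
    intro i j
    rw [trace_mul_comm, ← Matrix.mul_assoc, hP.toOrthogonalIdempotents.mul_eq j i]
    by_cases h : i = j
    · simp [h]
    · simp [h, Ne.symm h]
  calc (∑ i, ∑ j, c i j • (P i * E * P j)).trace
      = ∑ i, ∑ j, c i j * (P i * E * P j).trace := by
        simp only [trace_sum, trace_smul, smul_eq_mul]
    _ = ∑ i, a * (P i * E).trace := by simp [hdiag, hc]
    _ = a * E.trace := by
        rw [← Finset.mul_sum, ← trace_sum, ← Finset.sum_mul, hP.complete, one_mul]

end Matrix

theorem trace_psi_constant_general {d : ℕ} (T : ℝ)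
    (α₁ α₂ α₃ : ℝ)
    (E W : Matrix (Fin d) (Fin d) ℝ) (hEtr : E.trace = 0)
    (Ψ : ℝ → Matrix (Fin d) (Fin d) ℝ) (hsymm : ∀ t, (Ψ t).IsSymm)
    (e : ℝ → Fin d → (Fin d → ℝ)) (lam : ℝ → Fin d → ℝ)
    (hON : ∀ t, ∀ i j, e t i ⬝ᵥ e t j = if i = j then 1 else 0)
    (P : ℝ → Fin d → Matrix (Fin d) (Fin d) ℝ)
    (hP : ∀ t i, P t i = vecMulVec (e t i) (e t i))
    (f : ℝ → ℝ)
    (hode : ∀ t ∈ Set.Icc 0 T,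
      HasDerivWithinAt Ψ
        (-(α₁ • ((1 : Matrix (Fin d) (Fin d) ℝ) -
            ((d : ℝ) / (NormedSpace.exp (-Ψ t)).trace) •
              NormedSpace.exp (-Ψ t))) +
          α₂ • (∑ i, ∑ j, f (lam t i - lam t j) • (P t i * E * P t j)) +
          α₃ • (W * Ψ t - Ψ t * W))
        (Set.Icc 0 T) t) :
    (∀ t ∈ Set.Icc 0 T, (Ψ t).trace = (Ψ 0).trace) ∧
    (∀ t ∈ Set.Icc 0 T,
      (NormedSpace.exp (Ψ t)).det = (NormedSpace.exp (Ψ 0)).det) := by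
  have htrace : ∀ t ∈ Set.Icc 0 T, (Ψ t).trace = (Ψ 0).trace := by
    refine trace_eq_of_hasDerivWithinAt_trace_eq_zero hode fun t _ => ?_
    have hnorm := trace_one_sub_card_div_trace_exp_smul_exp (hsymm t).neg
    rw [Fintype.card_fin] at hnorm
    have hPt : CompleteOrthogonalIdempotents (P t) :=
      funext (hP t) ▸ completeOrthogonalIdempotents_vecMulVec (hON t)
    have hF := hPt.trace_sum_sum_smul_mul_mul
      (c := fun i j => f (lam t i - lam t j)) (fun i => congrArg f (sub_self (lam t i))) E
    have hcomm : (W * Ψ t - Ψ t * W).trace = 0 := by rw [trace_sub, trace_mul_comm, sub_self]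
    simp only [trace_add, trace_neg, trace_smul, hnorm, hF, hEtr, hcomm, smul_zero, mul_zero,
      neg_zero, add_zero]
  refine ⟨htrace, fun t ht => ?_⟩
  rw [det_exp_of_isSymm (hsymm t), det_exp_of_isSymm (hsymm 0), htrace t ht]

/-- Volume conservation for the log-morphology equation: if
`dΨ/dt = -α₁(1 - g(Ψ)exp(-Ψ)) + α₂ F(Ψ,E) + α₃(WΨ - ΨW)` on `[0,T]`, with
`g(Ψ) = d / tr (exp (-Ψ))`, `tr E = 0`, `W` antisymmetric and
`F(Ψ,E) = Σ_{i,j} f(λ_i - λ_j) P_i E P_j` with `f 0 = 2`, then `tr (Ψ t)` is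
constant in `t` (equivalently `det (exp (Ψ t))` is constant). -/
theorem trace_psi_constant {d : ℕ} (hd : 0 < d) (T : ℝ) (hT : 0 ≤ T)
    (α₁ α₂ α₃ : ℝ)
    (E W : Matrix (Fin d) (Fin d) ℝ) (hE : E.IsSymm) (hEtr : E.trace = 0)
    (hW : Wᵀ = -W)
    (Ψ : ℝ → Matrix (Fin d) (Fin d) ℝ) (hsymm : ∀ t, (Ψ t).IsSymm)
    (e : ℝ → Fin d → (Fin d → ℝ)) (lam : ℝ → Fin d → ℝ)
    (hON : ∀ t, ∀ i j, e t i ⬝ᵥ e t j = if i = j then 1 else 0)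
    (P : ℝ → Fin d → Matrix (Fin d) (Fin d) ℝ)
    (hP : ∀ t i, P t i = vecMulVec (e t i) (e t i))
    (hspec : ∀ t, Ψ t = ∑ i, lam t i • P t i)
    (f : ℝ → ℝ) (hf0 : f 0 = 2)
    (hode : ∀ t ∈ Set.Icc 0 T,
      HasDerivWithinAt Ψ
        (-(α₁ • ((1 : Matrix (Fin d) (Fin d) ℝ) -
            ((d : ℝ) / (NormedSpace.exp (-Ψ t)).trace) •
              NormedSpace.exp (-Ψ t))) +
          α₂ • (∑ i, ∑ j, f (lam t i - lam t j) • (P t i * E * P t j)) +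
          α₃ • (W * Ψ t - Ψ t * W))
        (Set.Icc 0 T) t) :
    (∀ t ∈ Set.Icc 0 T, (Ψ t).trace = (Ψ 0).trace) ∧
    (∀ t ∈ Set.Icc 0 T,
      (NormedSpace.exp (Ψ t)).det = (NormedSpace.exp (Ψ 0)).det) :=
  trace_psi_constant_general T α₁ α₂ α₃ E W hEtr Ψ hsymm e lam hON P hP f hode
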